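/- arXiv:1608.08930 — 2 statements merged into one kernel-verified Lean document; each statement's English description precedes it below -/
import Mathlib

section
/- Suppose the reference configuration is a phonon-stable equilibrium of E^a_hom and u^∞ ∈ 𝒰 satisfies ⟨δE^a(u^∞), v⟩ = 0 for all v ∈ 𝒰_0. Then there exists a function f : L → (ℝ^n)^R such that ⟨δ²E^a_hom(0)u^∞, v⟩ = Σ_{ξ∈L} Σ_{(ραβ)∈R} f_{(ραβ)}(ξ) · D_{(ραβ)}v(ξ) for all v ∈ 𝒰_0, and there is a constant C with |f(ξ)|_R ≤ C |Du^∞(ξ)|_R² for all ξ ∈ L with |ξ| ≥ R_def, where |g|_R² = Σ_{(ραβ)∈R} |g_{(ραβ)}|². -/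
open scoped BigOperators
noncomputable section

/-- Lattice indices: `ξ : Fin d → ℤ` labels the lattice site `F ξ ∈ F ℤ^d`. -/
abbrev ZLat (d : ℕ) := Fin d → ℤ

/-- Euclidean vectors. -/
abbrev Vec (m : ℕ) := EuclideanSpace ℝ (Fin m)

/-- Physical position of the lattice site with index `ξ`: `F ξ`. -/
def latpos {d : ℕ} (F : Matrix (Fin d) (Fin d) ℝ) (ξ : ZLat d) : Vec d :=
  WithLp.toLp 2 (fun i => ∑ j, F i j * (ξ j : ℝ))

/-- Embedding of `ℝ^d` into `ℝ^n` (`n = d` or `n = d+1`) by appending zeros. -/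
def embedV {d n : ℕ} (x : Vec d) : Vec n :=
  WithLp.toLp 2 (fun i : Fin n => if h : (i : ℕ) < d then x ⟨i, h⟩ else 0)

/-- The setting of a multilattice `⋃_α (F ℤ^d + p_α)` together with a finite
interaction range `R` and site potentials `V̂_ξ` (equal to a homogeneous
potential `V̂` outside the defect ball of radius `Rdef`). -/
structure MLSetting (d S n : ℕ) where
  hd : d = 2 ∨ d = 3
  hn : n = d ∨ (d = 2 ∧ n = d + 1)
  hS : 0 < S
  F : Matrix (Fin d) (Fin d) ℝ
  hdetF : F.det = 1
  p : Fin S → Vec d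
  hp0 : p ⟨0, hS⟩ = 0
  R : Finset (ZLat d × Fin S × Fin S)
  hR_noself : ∀ α : Fin S, ((0 : ZLat d), α, α) ∉ R
  hR_span : ∀ α : Fin S,
    Submodule.span ℝ {x : Vec d | ∃ ρ : ZLat d, (ρ, α, α) ∈ R ∧ x = latpos F ρ} = ⊤
  hR_pairs : ∀ α β : Fin S, α ≠ β → ((0 : ZLat d), α, β) ∈ R
  /-- the site potentials `V̂_ξ` -/
  Vsite : ZLat d → ((↥R → Vec n) → ℝ)
  /-- the homogeneous (defect-free) potential `V̂` -/
  Vhom : (↥R → Vec n) → ℝ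
  Rdef : ℝ
  hRdef : 0 < Rdef
  hVsite_hom : ∀ ξ : ZLat d, Rdef ≤ ‖latpos F ξ‖ → Vsite ξ = Vhom
  hV_smooth : ∀ ξ : ZLat d, ContDiff ℝ 4 (Vsite ξ)
  hVhom_smooth : ContDiff ℝ 4 Vhom
  hV_bdd : ∃ C : ℝ, ∀ (ξ : ZLat d) (g : ↥R → Vec n) (j : ℕ), j ≤ 4 →
      ‖iteratedFDeriv ℝ j (Vsite ξ) g‖ ≤ C
  hVhom_bdd : ∃ C : ℝ, ∀ (g : ↥R → Vec n) (j : ℕ), j ≤ 4 →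
      ‖iteratedFDeriv ℝ j Vhom g‖ ≤ C

/-- Multilattice displacements `u = (u_α(ξ))`. -/
abbrev Disp (d S n : ℕ) := ZLat d → Fin S → Vec n

namespace MLSetting

variable {d S n : ℕ} (A : MLSetting d S n)

/-- The index `α = 0` of the base species. -/
def idx0 : Fin S := ⟨0, A.hS⟩

/-- The reference finite differences `D y (ξ) = (F ρ + p_β - p_α)_{(ραβ) ∈ R}`
(independent of `ξ`). -/
def yvec : ↥A.R → Vec n :=
  fun e => embedV (latpos A.F e.1.1 + A.p e.1.2.2 - A.p e.1.2.1)

/-- Finite differences `D_{(ραβ)} u (ξ) = u_β(ξ+ρ) - u_α(ξ)`. -/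
def Dm (u : Disp d S n) (ξ : ZLat d) : ↥A.R → Vec n :=
  fun e => u (ξ + e.1.1) e.1.2.2 - u ξ e.1.2.1

/-- Square of the natural discrete energy norm `‖u‖_{a1}^2`. -/
def a1normSq (u : Disp d S n) : ℝ := ∑' ξ : ZLat d, ∑ e : ↥A.R, ‖A.Dm u ξ e‖ ^ 2

/-- The discrete energy norm `‖u‖_{a1}`. -/
def a1norm (u : Disp d S n) : ℝ := Real.sqrt (A.a1normSq u)

/-- Membership in the energy space `U` (finite energy norm). -/
def FiniteEnergy (u : Disp d S n) : Prop :=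
  Summable (fun ξ : ZLat d => ∑ e : ↥A.R, ‖A.Dm u ξ e‖ ^ 2)

/-- The projection `R_1` of the interaction range onto lattice directions. -/
def R1 : Finset (ZLat d) := A.R.image (fun e => e.1)

/-- Membership in the test space `U_0`: `D u_0` and `u_α - u_0` have compact
support. -/
def InU0 (u : Disp d S n) : Prop :=
  ∃ T : Finset (ZLat d), ∀ ξ : ZLat d, ξ ∉ T →
    (∀ ρ ∈ A.R1, u (ξ + ρ) A.idx0 = u ξ A.idx0) ∧ ∀ α : Fin S, u ξ α = u ξ A.idx0

/-- First variation `⟨δE^a(u), v⟩` of the atomistic energy. -/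
def dE (u v : Disp d S n) : ℝ :=
  ∑' ξ : ZLat d, fderiv ℝ (A.Vsite ξ) (A.yvec + A.Dm u ξ) (A.Dm v ξ)

/-- First variation `⟨δE^a_hom(u), v⟩` of the homogeneous energy. -/
def dEhom (u v : Disp d S n) : ℝ :=
  ∑' ξ : ZLat d, fderiv ℝ A.Vhom (A.yvec + A.Dm u ξ) (A.Dm v ξ)

/-- Second variation `⟨δ²E^a(u)v, w⟩`. -/
def d2E (u v w : Disp d S n) : ℝ :=
  ∑' ξ : ZLat d, iteratedFDeriv ℝ 2 (A.Vsite ξ) (A.yvec + A.Dm u ξ) ![A.Dm v ξ, A.Dm w ξ]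

/-- Second variation `⟨δ²E^a_hom(u)v, w⟩`. -/
def d2Ehom (u v w : Disp d S n) : ℝ :=
  ∑' ξ : ZLat d, iteratedFDeriv ℝ 2 A.Vhom (A.yvec + A.Dm u ξ) ![A.Dm v ξ, A.Dm w ξ]

/-- Phonon stability of the reference configuration: the reference state is an
equilibrium of `E^a_hom` and `δ²E^a_hom(0)` is coercive w.r.t. `‖·‖_{a1}`. -/
def PhononStable : Prop :=
  (∀ v : Disp d S n, A.InU0 v → A.dEhom 0 v = 0) ∧
  ∃ γ : ℝ, 0 < γ ∧ ∀ v : Disp d S n, A.InU0 v → γ * A.a1normSq v ≤ A.d2Ehom 0 v v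

end MLSetting

/-- Finite difference `D_ρ f(ξ) = f(ξ+ρ) - f(ξ)` of a lattice function. -/
def Dfd {d : ℕ} {E : Type*} [AddCommGroup E] (ρ : ZLat d) (f : ZLat d → E) : ZLat d → E :=
  fun ξ => f (ξ + ρ) - f ξ

/-- Iterated finite difference `D_{ρ⃗} = D_{ρ_1} ⋯ D_{ρ_j}`. -/
def DfdIter {d : ℕ} {E : Type*} [AddCommGroup E] :
    ∀ {j : ℕ}, (Fin j → ZLat d) → (ZLat d → E) → (ZLat d → E)
  | 0, _, f => f
  | (_ + 1), ρs, f => Dfd (ρs 0) (DfdIter (fun i => ρs i.succ) f)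

/-!
The residual at a site `ξ` is the functional
`L_ξ = δ²V̂(Dy)[Du^∞(ξ)] - δV̂_ξ(Dy + Du^∞(ξ)) + δV̂(Dy)` on `(ℝ^n)^R`, and `f(ξ)` is its
componentwise Riesz representative. Tested against `Dv`, the last two terms sum to
`⟨δE^a(u^∞), v⟩ = 0` and `⟨δE^a_hom(0), v⟩ = 0`, which leaves `⟨δ²E^a_hom(0)u^∞, v⟩`.
Outside the defect core `V̂_ξ = V̂`, so `-L_ξ` is the first-order Taylor remainder of `δV̂`
at `Dy`, which is quadratic in `Du^∞(ξ)` because `δ³V̂` is bounded.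
-/

section Riesz

variable {ι E : Type*} [DecidableEq ι] [NormedAddCommGroup E] [InnerProductSpace ℝ E]
  [CompleteSpace E]

def piRiesz (L : (ι → E) →L[ℝ] ℝ) (i : ι) : E :=
  (InnerProductSpace.toDual ℝ E).symm (L.comp (ContinuousLinearMap.single ℝ (fun _ => E) i))

theorem sum_inner_piRiesz [Fintype ι] (L : (ι → E) →L[ℝ] ℝ) (w : ι → E) :
    ∑ i, (inner ℝ (piRiesz L i) (w i) : ℝ) = L w := by
  simp only [piRiesz, InnerProductSpace.toDual_symm_apply]
  exact ContinuousLinearMap.sum_comp_single ℝ (fun _ => E) L w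

theorem norm_piRiesz_le [Fintype ι] (L : (ι → E) →L[ℝ] ℝ) (i : ι) : ‖piRiesz L i‖ ≤ ‖L‖ := by
  rw [piRiesz, LinearIsometryEquiv.norm_map]
  exact (L.opNorm_comp_le _).trans
    (mul_le_of_le_one_right (norm_nonneg L) (ContinuousLinearMap.norm_single_le_one ℝ _ i))

end Riesz

section NormBounds

variable {ι E : Type*} [Fintype ι] [SeminormedAddCommGroup E]

theorem sq_norm_pi_le_sum_sq_norm (x : ι → E) : ‖x‖ ^ 2 ≤ ∑ i, ‖x i‖ ^ 2 := by
  have hsum : 0 ≤ ∑ i, ‖x i‖ ^ 2 := Finset.sum_nonneg fun i _ => sq_nonneg _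
  refine (Real.le_sqrt (norm_nonneg x) hsum).1 ((pi_norm_le_iff_of_nonneg (Real.sqrt_nonneg _)).2
    fun i => (Real.le_sqrt (norm_nonneg _) hsum).2 ?_)
  exact Finset.single_le_sum (f := fun j => ‖x j‖ ^ 2) (fun j _ => sq_nonneg _)
    (Finset.mem_univ i)

theorem sqrt_sum_sq_norm_le {x : ι → E} {M : ℝ} (hM : 0 ≤ M) (hx : ∀ i, ‖x i‖ ≤ M) :
    √(∑ i, ‖x i‖ ^ 2) ≤ √(Fintype.card ι) * M := by
  rw [← Real.sqrt_sq hM, ← Real.sqrt_mul (Nat.cast_nonneg _)]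
  refine Real.sqrt_le_sqrt ?_
  calc ∑ i, ‖x i‖ ^ 2 ≤ ∑ _i : ι, M ^ 2 :=
        Finset.sum_le_sum fun i _ => pow_le_pow_left₀ (norm_nonneg _) (hx i) 2
    _ = Fintype.card ι * M ^ 2 := by simp

end NormBounds

theorem norm_image_add_sub_sub_fderiv_le {E F : Type*} [NormedAddCommGroup E] [NormedSpace ℝ E]
    [NormedAddCommGroup F] [NormedSpace ℝ F] {φ : E → F} {K : ℝ} (hφ : ContDiff ℝ 2 φ)
    (hK : ∀ x, ‖iteratedFDeriv ℝ 2 φ x‖ ≤ K) (y g : E) :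
    ‖φ (y + g) - φ y - fderiv ℝ φ y g‖ ≤ K * ‖g‖ ^ 2 := by
  have hK0 : 0 ≤ K := (norm_nonneg _).trans (hK y)
  have hdφ : Differentiable ℝ (fderiv ℝ φ) :=
    (hφ.fderiv_right (m := 1) le_rfl).differentiable one_ne_zero
  have hLip : ∀ x, ‖fderiv ℝ φ x - fderiv ℝ φ y‖ ≤ K * ‖x - y‖ := fun x =>
    convex_univ.norm_image_sub_le_of_norm_fderiv_le (fun w _ => hdφ w)
      (fun w _ => ((norm_iteratedFDeriv_one _).symm.trans norm_iteratedFDeriv_fderiv).trans_le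
        (hK w)) trivial trivial
  have hball : ∀ x ∈ Metric.closedBall y ‖g‖, ‖fderiv ℝ φ x - fderiv ℝ φ y‖ ≤ K * ‖g‖ :=
    fun x hx => (hLip x).trans (mul_le_mul_of_nonneg_left (mem_closedBall_iff_norm.1 hx) hK0)
  have hmem : y + g ∈ Metric.closedBall y ‖g‖ := by simp
  simpa [sq, mul_assoc] using (convex_closedBall y ‖g‖).norm_image_sub_le_of_norm_fderiv_le'
    (fun x _ => hφ.differentiable two_ne_zero x) hball
    (Metric.mem_closedBall_self (norm_nonneg g)) hmem

namespace MLSetting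

variable {d S n : ℕ} (A : MLSetting d S n)

def linResidual (u : Disp d S n) (ξ : ZLat d) : (↥A.R → Vec n) →L[ℝ] ℝ :=
  fderiv ℝ (fderiv ℝ A.Vhom) A.yvec (A.Dm u ξ)
    - fderiv ℝ (A.Vsite ξ) (A.yvec + A.Dm u ξ) + fderiv ℝ A.Vhom A.yvec

theorem Dm_zero (ξ : ZLat d) : A.Dm (0 : Disp d S n) ξ = 0 := by
  funext e
  simp [Dm]

theorem exists_finset_Dm_eq_zero {v : Disp d S n} (hv : A.InU0 v) :
    ∃ T : Finset (ZLat d), ∀ ξ ∉ T, A.Dm v ξ = 0 := by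
  obtain ⟨T, hT⟩ := hv
  refine ⟨T ∪ T.biUnion (fun t => A.R1.image (t - ·)), fun ξ hξ => ?_⟩
  have hξT : ξ ∉ T := fun h => hξ (Finset.mem_union_left _ h)
  funext e
  have hρ : e.1.1 ∈ A.R1 := Finset.mem_image.2 ⟨e.1, e.2, rfl⟩
  have hξρ : ξ + e.1.1 ∉ T := fun h => hξ (Finset.mem_union_right _
    (Finset.mem_biUnion.2 ⟨ξ + e.1.1, h, Finset.mem_image.2 ⟨e.1.1, hρ, by abel⟩⟩))
  simp [Dm, (hT ξ hξT).2 e.1.2.1, (hT _ hξρ).2 e.1.2.2, (hT ξ hξT).1 e.1.1 hρ]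

theorem summable_apply_Dm {v : Disp d S n} (hv : A.InU0 v)
    (φ : ZLat d → (↥A.R → Vec n) → ℝ) (hφ : ∀ ξ, φ ξ 0 = 0) :
    Summable fun ξ => φ ξ (A.Dm v ξ) := by
  obtain ⟨T, hT⟩ := A.exists_finset_Dm_eq_zero hv
  exact summable_of_ne_finset_zero fun ξ hξ => by rw [hT ξ hξ, hφ]

theorem d2Ehom_zero_eq_tsum_linResidual (hhom : ∀ v : Disp d S n, A.InU0 v → A.dEhom 0 v = 0)
    {u : Disp d S n} (hequi : ∀ v : Disp d S n, A.InU0 v → A.dE u v = 0)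
    {v : Disp d S n} (hv : A.InU0 v) :
    A.d2Ehom 0 u v = ∑' ξ, A.linResidual u ξ (A.Dm v ξ) := by
  have h2 := A.summable_apply_Dm hv
    (fun ξ w => iteratedFDeriv ℝ 2 A.Vhom (A.yvec + A.Dm 0 ξ) ![A.Dm u ξ, w])
    fun ξ => ContinuousMultilinearMap.map_coord_zero _ 1 rfl
  have hE := A.summable_apply_Dm hv (fun ξ => fderiv ℝ (A.Vsite ξ) (A.yvec + A.Dm u ξ))
    fun ξ => map_zero _
  have hH := A.summable_apply_Dm hv (fun ξ => fderiv ℝ A.Vhom (A.yvec + A.Dm 0 ξ))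
    fun ξ => map_zero _
  have hpoint : ∀ ξ, A.linResidual u ξ (A.Dm v ξ)
      = iteratedFDeriv ℝ 2 A.Vhom (A.yvec + A.Dm 0 ξ) ![A.Dm u ξ, A.Dm v ξ]
        - fderiv ℝ (A.Vsite ξ) (A.yvec + A.Dm u ξ) (A.Dm v ξ)
        + fderiv ℝ A.Vhom (A.yvec + A.Dm 0 ξ) (A.Dm v ξ) := fun ξ => by
    simp [linResidual, Dm_zero, iteratedFDeriv_two_apply]
  rw [tsum_congr hpoint, (h2.sub hE).tsum_add hH, h2.tsum_sub hE]
  change A.d2Ehom 0 u v = A.d2Ehom 0 u v - A.dE u v + A.dEhom 0 v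
  rw [hequi v hv, hhom v hv, sub_zero, add_zero]

theorem exists_norm_linResidual_le :
    ∃ K : ℝ, 0 ≤ K ∧ ∀ (u : Disp d S n) (ξ : ZLat d), A.Rdef ≤ ‖latpos A.F ξ‖ →
      ‖A.linResidual u ξ‖ ≤ K * ‖A.Dm u ξ‖ ^ 2 := by
  obtain ⟨C, hC⟩ := A.hVhom_bdd
  refine ⟨max C 0, le_max_right _ _, fun u ξ hξ => ?_⟩
  have hL : A.linResidual u ξ = -(fderiv ℝ A.Vhom (A.yvec + A.Dm u ξ)
      - fderiv ℝ A.Vhom A.yvec - fderiv ℝ (fderiv ℝ A.Vhom) A.yvec (A.Dm u ξ)) := by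
    rw [linResidual, A.hVsite_hom ξ hξ]
    abel
  rw [hL, norm_neg]
  exact norm_image_add_sub_sub_fderiv_le (A.hVhom_smooth.fderiv_right (by norm_num))
    (fun x => norm_iteratedFDeriv_fderiv.trans_le ((hC x 3 (by norm_num)).trans
      (le_max_left _ _))) _ _

end MLSetting

theorem linearized_residual_general {d S n : ℕ} (A : MLSetting d S n)
    (hstab : A.PhononStable)
    (uinf : Disp d S n)
    (hequi : ∀ v : Disp d S n, A.InU0 v → A.dE uinf v = 0) :
    ∃ f : ZLat d → (↥A.R → Vec n),
      (∀ v : Disp d S n, A.InU0 v →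
        A.d2Ehom 0 uinf v
          = ∑' ξ : ZLat d, ∑ e : ↥A.R, (inner ℝ (f ξ e) (A.Dm v ξ e) : ℝ)) ∧
      ∃ C : ℝ, ∀ ξ : ZLat d, A.Rdef ≤ ‖latpos A.F ξ‖ →
        Real.sqrt (∑ e : ↥A.R, ‖f ξ e‖ ^ 2)
          ≤ C * ∑ e : ↥A.R, ‖A.Dm uinf ξ e‖ ^ 2 := by
  obtain ⟨K, hK0, hK⟩ := A.exists_norm_linResidual_le
  refine ⟨fun ξ => piRiesz (A.linResidual uinf ξ), fun v hv => ?_,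
    √(Fintype.card ↥A.R) * K, fun ξ hξ => ?_⟩
  · rw [A.d2Ehom_zero_eq_tsum_linResidual hstab.1 hequi hv]
    exact tsum_congr fun ξ => (sum_inner_piRiesz _ _).symm
  · calc √(∑ e, ‖piRiesz (A.linResidual uinf ξ) e‖ ^ 2)
        ≤ √(Fintype.card ↥A.R) * ‖A.linResidual uinf ξ‖ :=
          sqrt_sum_sq_norm_le (norm_nonneg _) (norm_piRiesz_le _)
      _ ≤ √(Fintype.card ↥A.R) * (K * ∑ e, ‖A.Dm uinf ξ e‖ ^ 2) := by
          gcongr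
          exact (hK uinf ξ hξ).trans
            (mul_le_mul_of_nonneg_left (sq_norm_pi_le_sum_sq_norm _) hK0)
      _ = √(Fintype.card ↥A.R) * K * ∑ e, ‖A.Dm uinf ξ e‖ ^ 2 := (mul_assoc _ _ _).symm

/-- Theorem: linearized residual.
Suppose the reference configuration is a phonon-stable equilibrium of
`E^a_hom` and `u^∞ ∈ 𝒰` is an equilibrium of the defective energy `E^a`.
Then there is `f : L → (ℝ^n)^R` representing the linearized equation,
`⟨δ²E^a_hom(0)u^∞, v⟩ = Σ_ξ Σ_{(ραβ)∈R} f_{(ραβ)}(ξ) · D_{(ραβ)}v(ξ)` for all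
`v ∈ 𝒰_0`, with the quadratic residual bound
`|f(ξ)|_R ≤ C |Du^∞(ξ)|_R²` for `|ξ| ≥ R_def`. -/
theorem linearized_residual {d S n : ℕ} (A : MLSetting d S n)
    (hstab : A.PhononStable)
    (uinf : Disp d S n) (hfe : A.FiniteEnergy uinf)
    (hequi : ∀ v : Disp d S n, A.InU0 v → A.dE uinf v = 0) :
    ∃ f : ZLat d → (↥A.R → Vec n),
      (∀ v : Disp d S n, A.InU0 v →
        A.d2Ehom 0 uinf v
          = ∑' ξ : ZLat d, ∑ e : ↥A.R, (inner ℝ (f ξ e) (A.Dm v ξ e) : ℝ)) ∧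
      ∃ C : ℝ, ∀ ξ : ZLat d, A.Rdef ≤ ‖latpos A.F ξ‖ →
        Real.sqrt (∑ e : ↥A.R, ‖f ξ e‖ ^ 2)
          ≤ C * ∑ e : ↥A.R, ‖A.Dm uinf ξ e‖ ^ 2 :=
  linearized_residual_general A hstab uinf hequi
end
end

section
/- Let Ω = (−1/2, 1/2]^d, let N ∈ ℕ, ε = 1/N, and Ω_ε = {−1/2+ε, −1/2+2ε, …, 1/2}^d. For periodic fields U ∈ C³(Ω, ℝ^n) and p_α ∈ C²(Ω, ℝ^n), define the atomistic fields u^ε_α(ξ) = U(ξ) + ε p_α(ξ) for ξ ∈ Ω_ε. Then there is a constant C, independent of ε, such that |E^a_ε(u^ε) − E^c_Ω(U, p)| ≤ C ε, where E^a_ε(u^ε) = ε^d Σ_{ξ∈Ω_ε} V_ξ(D^ε u^ε(ξ)) with D^ε_{(ραβ)}u^ε(ξ) = (u^ε_β(ξ+ερ) − u^ε_α(ξ))/ε (interpreted periodically), and E^c_Ω(U, p) = ∫_Ω V((∇_ρ U(x) + p_β(x) − p_α(x))_{(ραβ)∈R}) dx. -/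
/-!
Away from the finitely many defect sites (the lattice points in the defect ball) `V_ξ = V`, and
both potentials are bounded, so the defect sites contribute `O(ε^d)`, hence `O(ε)`. The cube `Ω`
is the disjoint union of the `ε^{-d}` cells of side `ε` whose upper corners are the points of
`Ω_ε`. On the cell of `ξ`, the finite differences `D^ε u^ε(ξ)` differ from the Cauchy–Born strain
at any point of the cell by `O(ε)`: a first-order Taylor expansion of `U` and the Lipschitz
continuity of the `p_α`, with constants that are uniform because `∇²U` and `∇p_α` are continuous
and periodic. Since `V` is Lipschitz, `ε^d V(D^ε u^ε(ξ))` and the integral of the Cauchy–Born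
energy density over the cell differ by `O(ε^{d+1})`, and summing over the cells gives `O(ε)`.
-/

open scoped BigOperators
noncomputable section

namespace MLSetting

variable {d S n : ℕ} (A : MLSetting d S n)

/-- The Cauchy–Born strain `((∇U)ρ + p_β − p_α)_{(ραβ)∈R}` at the point `x`. -/
def cbStrain (Z : Vec d → Vec n) (q : Fin S → Vec d → Vec n) (x : Vec d) :
    ↥A.R → Vec n :=
  fun e => fderiv ℝ Z x (latpos A.F e.1.1) + q e.1.2.2 x - q e.1.2.1 x

/-- The scaled finite differences
`D^ε_{(ραβ)} u^ε(x) = (u^ε_β(x + ερ) − u^ε_α(x))/ε`, `ε = 1/N`, of the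
atomistic fields `u^ε_α = U + ε q_α` obtained from continuum fields. -/
def Deps (N : ℕ) (U : Vec d → Vec n) (q : Fin S → Vec d → Vec n) (x : Vec d) :
    ↥A.R → Vec n :=
  fun e =>
    (N : ℝ) •
      ((U (x + (N : ℝ)⁻¹ • latpos A.F e.1.1)
          + (N : ℝ)⁻¹ • q e.1.2.2 (x + (N : ℝ)⁻¹ • latpos A.F e.1.1))
        - (U x + (N : ℝ)⁻¹ • q e.1.2.1 x))

end MLSetting

/-- The index set of the scaled atomistic domain
`Ω_ε = {-1/2+ε, …, 1/2}^d`, `ε = 1/N`. -/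
def gridSet (d : ℕ) (N : ℕ) : Finset (ZLat d) :=
  Finset.Icc (fun _ => 1) (fun _ => (N : ℤ))

/-- The point `(-1/2 + ε z_1, …, -1/2 + ε z_d)` of `Ω_ε`, `ε = 1/N`. -/
def gridPt {d : ℕ} (N : ℕ) (z : ZLat d) : Vec d :=
  WithLp.toLp 2 (fun i => -(1 / 2 : ℝ) + (z i : ℝ) / (N : ℝ))

/-- The continuum domain `Ω = (-1/2, 1/2]^d`. -/
def cubeΩ (d : ℕ) : Set (Vec d) :=
  {x : Vec d | ∀ i, x i ∈ Set.Ioc (-(1 / 2 : ℝ)) (1 / 2 : ℝ)}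

/-- The integer vector `m` as an element of `ℝ^d`. -/
def intVec {d : ℕ} (m : ZLat d) : Vec d := WithLp.toLp 2 (fun i => (m i : ℝ))

/-- `1`-periodicity (in each coordinate) of a continuum field. -/
def ZPeriodic {d n : ℕ} (U : Vec d → Vec n) : Prop :=
  ∀ (x : Vec d) (m : ZLat d), U (x + intVec m) = U x

namespace MLSetting

variable {d S n : ℕ} (A : MLSetting d S n)

/-- The scaled atomistic energy
`E^a_ε(u^ε) = ε^d Σ_{ξ∈Ω_ε} V_ξ(D^ε u^ε(ξ))`, `ε = 1/N`, evaluated on the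
atomistic fields `u^ε_α = U + ε q_α`. -/
def Eaeps (N : ℕ) (U : Vec d → Vec n) (q : Fin S → Vec d → Vec n) : ℝ :=
  ((N : ℝ)⁻¹) ^ d *
    ∑ z ∈ gridSet d N,
      (A.Vsite z (A.yvec + A.Deps N U q (gridPt N z)) - A.Vhom A.yvec)

/-- The Cauchy–Born energy on `Ω`:
`E^c_Ω(U,p) = ∫_Ω V((∇_ρ U + p_β − p_α)_{(ραβ)∈R}) dx`. -/
def EcΩ (U : Vec d → Vec n) (q : Fin S → Vec d → Vec n) : ℝ :=
  ∫ x in cubeΩ d, (A.Vhom (A.yvec + A.cbStrain U q x) - A.Vhom A.yvec)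

/-- The second variation `⟨δ²E^a_ε(0) z^ε, z^ε⟩` of the scaled atomistic
energy at the reference state, on the fields `z^ε_α = Z + ε q_α`. -/
def d2Eaeps (N : ℕ) (Z : Vec d → Vec n) (q : Fin S → Vec d → Vec n) : ℝ :=
  ((N : ℝ)⁻¹) ^ d *
    ∑ z ∈ gridSet d N,
      iteratedFDeriv ℝ 2 (A.Vsite z) A.yvec
        ![A.Deps N Z q (gridPt N z), A.Deps N Z q (gridPt N z)]

/-- The second variation `⟨δ²E^c_Ω(0)(Z,q), (Z,q)⟩` of the Cauchy–Born
energy on `Ω` at the reference state. -/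
def d2EcΩ (Z : Vec d → Vec n) (q : Fin S → Vec d → Vec n) : ℝ :=
  ∫ x in cubeΩ d,
    iteratedFDeriv ℝ 2 A.Vhom A.yvec ![A.cbStrain Z q x, A.cbStrain Z q x]

end MLSetting

open MeasureTheory Set
open scoped NNReal

section Analysis

variable {E F : Type*} [NormedAddCommGroup E] [NormedSpace ℝ E]
  [NormedAddCommGroup F] [NormedSpace ℝ F]

theorem fderiv_add_of_forall_add_eq {f : E → F} {c : E} (h : ∀ x, f (x + c) = f x) (x : E) :
    fderiv ℝ f (x + c) = fderiv ℝ f x := by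
  rw [← fderiv_comp_add_right, funext h]

theorem lipschitzWith_toNNReal_of_norm_fderiv_le {f : E → F} (hf : Differentiable ℝ f) {C : ℝ}
    (hC : ∀ x, ‖fderiv ℝ f x‖ ≤ C) : LipschitzWith C.toNNReal f :=
  lipschitzWith_of_nnnorm_fderiv_le hf fun x => by
    rw [← NNReal.coe_le_coe, coe_nnnorm]
    exact (hC x).trans (Real.le_coe_toNNReal C)

theorem norm_inv_smul_sub_sub_fderiv_le {U : E → F} (hU : Differentiable ℝ U) {K : ℝ≥0}
    (hDU : LipschitzWith K (fderiv ℝ U)) {t : ℝ} (ht : 0 < t) (x y v : E) :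
    ‖t⁻¹ • (U (y + t • v) - U y) - fderiv ℝ U x v‖ ≤ K * (t * ‖v‖ + ‖y - x‖) * ‖v‖ := by
  have htv : ‖t • v‖ = t * ‖v‖ := by rw [norm_smul, Real.norm_of_nonneg ht.le]
  have hbound : ∀ z ∈ Metric.closedBall y (t * ‖v‖),
      ‖fderiv ℝ U z - fderiv ℝ U x‖ ≤ K * (t * ‖v‖ + ‖y - x‖) := by
    intro z hz
    rw [Metric.mem_closedBall, dist_eq_norm] at hz
    calc ‖fderiv ℝ U z - fderiv ℝ U x‖ ≤ K * ‖z - x‖ := hDU.norm_sub_le z x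
      _ ≤ K * (t * ‖v‖ + ‖y - x‖) := by
        gcongr
        calc ‖z - x‖ = ‖(z - y) + (y - x)‖ := by rw [sub_add_sub_cancel]
          _ ≤ ‖z - y‖ + ‖y - x‖ := norm_add_le _ _
          _ ≤ t * ‖v‖ + ‖y - x‖ := by gcongr
  have hmvt := (convex_closedBall y (t * ‖v‖)).norm_image_sub_le_of_norm_fderiv_le'
    (fun z _ => hU z) hbound (Metric.mem_closedBall_self (by positivity))
    (by rw [Metric.mem_closedBall, dist_eq_norm, add_sub_cancel_left, htv])
  rw [add_sub_cancel_left, htv] at hmvt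
  have hdq : t⁻¹ • (U (y + t • v) - U y) - fderiv ℝ U x v
      = t⁻¹ • (U (y + t • v) - U y - fderiv ℝ U x (t • v)) := by
    rw [map_smul, smul_sub _ _ (t • _), inv_smul_smul₀ ht.ne']
  rw [hdq, norm_smul, Real.norm_of_nonneg (inv_nonneg.2 ht.le)]
  calc t⁻¹ * ‖U (y + t • v) - U y - fderiv ℝ U x (t • v)‖
      ≤ t⁻¹ * (K * (t * ‖v‖ + ‖y - x‖) * (t * ‖v‖)) := by gcongr
    _ = K * (t * ‖v‖ + ‖y - x‖) * ‖v‖ := by field_simp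

end Analysis

section Periodic

variable {d : ℕ} {E : Type*} [NormedAddCommGroup E]

theorem exists_forall_norm_le_of_forall_add_intVec_eq {f : Vec d → E} (hf : Continuous f)
    (hper : ∀ x m, f (x + intVec m) = f x) : ∃ C, ∀ x, ‖f x‖ ≤ C := by
  have hK : IsCompact (WithLp.toLp 2 '' Icc (0 : Fin d → ℝ) 1) :=
    isCompact_Icc.image (PiLp.continuous_toLp 2 _)
  obtain ⟨C, hC⟩ := (hK.image hf).isBounded.exists_norm_le
  refine ⟨C, fun x => ?_⟩
  have hfract : x + intVec (fun i => -⌊x i⌋) ∈ WithLp.toLp 2 '' Icc (0 : Fin d → ℝ) 1 :=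
    ⟨fun i => Int.fract (x i), ⟨fun i => Int.fract_nonneg _, fun i => (Int.fract_lt_one _).le⟩,
      by ext i; simp [intVec, Int.fract, sub_eq_add_neg]⟩
  rw [← hper x]
  exact hC _ (mem_image_of_mem f hfract)

variable [NormedSpace ℝ E]

theorem exists_lipschitzWith_of_forall_add_intVec_eq {f : Vec d → E} (hf : ContDiff ℝ 1 f)
    (hper : ∀ x m, f (x + intVec m) = f x) : ∃ K, LipschitzWith K f := by
  obtain ⟨C, hC⟩ := exists_forall_norm_le_of_forall_add_intVec_eq (hf.continuous_fderiv one_ne_zero)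
    fun x m => fderiv_add_of_forall_add_eq (fun y => hper y m) x
  exact ⟨_, lipschitzWith_toNNReal_of_norm_fderiv_le (hf.differentiable one_ne_zero) hC⟩

end Periodic

section EuclideanSpace

variable {ι : Type*}

theorem setOf_forall_apply_mem_Ioc_eq_preimage (a b : ι → ℝ) :
    {x : EuclideanSpace ℝ ι | ∀ i, x i ∈ Ioc (a i) (b i)}
      = WithLp.ofLp ⁻¹' univ.pi fun i => Ioc (a i) (b i) := by
  ext x; simp

variable [Fintype ι]

theorem norm_le_sum_norm_apply (x : EuclideanSpace ℝ ι) : ‖x‖ ≤ ∑ i, ‖x i‖ := by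
  rw [EuclideanSpace.norm_eq]
  exact Real.sqrt_le_iff.2
    ⟨by positivity, Finset.sum_sq_le_sq_sum_of_nonneg fun i _ => norm_nonneg _⟩

theorem measurableSet_setOf_forall_apply_mem_Ioc (a b : ι → ℝ) :
    MeasurableSet {x : EuclideanSpace ℝ ι | ∀ i, x i ∈ Ioc (a i) (b i)} := by
  rw [setOf_forall_apply_mem_Ioc_eq_preimage]
  exact (PiLp.volume_preserving_ofLp ι).measurable
    (MeasurableSet.univ_pi fun _ => measurableSet_Ioc)

theorem volume_setOf_forall_apply_mem_Ioc (a b : ι → ℝ) :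
    volume {x : EuclideanSpace ℝ ι | ∀ i, x i ∈ Ioc (a i) (b i)}
      = ∏ i, ENNReal.ofReal (b i - a i) := by
  rw [setOf_forall_apply_mem_Ioc_eq_preimage, (PiLp.volume_preserving_ofLp ι).measure_preimage
    (MeasurableSet.univ_pi fun _ => measurableSet_Ioc).nullMeasurableSet, volume_pi_pi]
  simp_rw [Real.volume_Ioc]

end EuclideanSpace

section Grid

variable {d : ℕ}

@[simp]
theorem gridPt_apply (N : ℕ) (z : ZLat d) (i : Fin d) :
    gridPt N z i = -(1 / 2 : ℝ) + (z i : ℝ) / N :=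
  rfl

def gridCell (N : ℕ) (z : ZLat d) : Set (Vec d) :=
  {x | ∀ i, x i ∈ Ioc (gridPt N z i - (N : ℝ)⁻¹) (gridPt N z i)}

theorem measurableSet_gridCell (N : ℕ) (z : ZLat d) : MeasurableSet (gridCell N z) :=
  measurableSet_setOf_forall_apply_mem_Ioc _ _

theorem volume_gridCell (N : ℕ) (z : ZLat d) :
    volume (gridCell N z) = ENNReal.ofReal (((N : ℝ)⁻¹) ^ d) := by
  rw [gridCell, volume_setOf_forall_apply_mem_Ioc, ENNReal.ofReal_pow (by positivity)]
  simp only [sub_sub_cancel, Finset.prod_const, Finset.card_univ, Fintype.card_fin]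

theorem mem_gridCell_iff {N : ℕ} (hN : 0 < N) {z : ZLat d} {x : Vec d} :
    x ∈ gridCell N z ↔ ∀ i, ⌈(x i + 1 / 2) * N⌉ = z i := by
  have hNR : (0 : ℝ) < N := Nat.cast_pos.2 hN
  have hinv : (N : ℝ)⁻¹ * N = 1 := inv_mul_cancel₀ hNR.ne'
  refine forall_congr' fun i => ?_
  have hshift : (x i + 1 / 2) * N = z i + (x i - gridPt N z i) * N := by
    rw [gridPt_apply]; field_simp; ring
  rw [Int.ceil_eq_iff, hshift, mem_Ioc]
  constructor <;> rintro ⟨h₁, h₂⟩ <;> constructor <;> nlinarith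

theorem cubeΩ_eq_biUnion_gridCell {N : ℕ} (hN : 0 < N) :
    cubeΩ d = ⋃ z ∈ gridSet d N, gridCell N z := by
  have hNR : (0 : ℝ) < N := Nat.cast_pos.2 hN
  ext x
  simp only [mem_iUnion, exists_prop, gridSet, Finset.mem_Icc]
  constructor
  · intro hx
    refine ⟨fun i => ⌈(x i + 1 / 2) * N⌉, ⟨fun i => ?_, fun i => ?_⟩, mem_gridCell_iff hN |>.2
      fun i => rfl⟩
    · exact Int.one_le_ceil_iff.2 (mul_pos (by linarith [(hx i).1]) hNR)
    · exact Int.ceil_le.2 (by push_cast; nlinarith [(hx i).2])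
  · rintro ⟨z, ⟨hz₁, hz₂⟩, hx⟩ i
    have h₁ : (1 : ℝ) ≤ z i := by exact_mod_cast hz₁ i
    have h₂ : (z i : ℝ) ≤ N := by exact_mod_cast hz₂ i
    obtain ⟨hlo, hhi⟩ := hx i
    rw [gridPt_apply] at hlo hhi
    constructor
    · have : (N : ℝ)⁻¹ ≤ z i / N := by
        rw [inv_eq_one_div]; exact div_le_div_of_nonneg_right h₁ hNR.le
      linarith
    · have : (z i : ℝ) / N ≤ 1 := (div_le_one hNR).2 h₂
      linarith

theorem pairwiseDisjoint_gridCell {N : ℕ} (hN : 0 < N) (s : Set (ZLat d)) :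
    s.PairwiseDisjoint (gridCell N) := by
  intro z _ z' _ hne
  refine Set.disjoint_left.2 fun x hx hx' => hne (funext fun i => ?_)
  rw [← (mem_gridCell_iff hN).1 hx i, (mem_gridCell_iff hN).1 hx' i]

theorem norm_sub_gridPt_le {N : ℕ} {z : ZLat d} {x : Vec d} (hx : x ∈ gridCell N z) :
    ‖x - gridPt N z‖ ≤ d * (N : ℝ)⁻¹ := by
  have hcoord : ∀ i, ‖(x - gridPt N z) i‖ ≤ (N : ℝ)⁻¹ := fun i => by
    rw [PiLp.sub_apply, Real.norm_eq_abs, abs_le]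
    constructor <;> linarith [(hx i).1, (hx i).2]
  calc ‖x - gridPt N z‖ ≤ ∑ i, ‖(x - gridPt N z) i‖ := norm_le_sum_norm_apply _
    _ ≤ ∑ _i : Fin d, (N : ℝ)⁻¹ := Finset.sum_le_sum fun i _ => hcoord i
    _ = d * (N : ℝ)⁻¹ := by simp

theorem card_gridSet (d N : ℕ) : (gridSet d N).card = N ^ d := by
  simp [gridSet, Pi.card_Icc, Int.card_Icc]

theorem Continuous.integrableOn_cubeΩ {E : Type*} [NormedAddCommGroup E] {f : Vec d → E}
    (hf : Continuous f) : IntegrableOn f (cubeΩ d) :=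
  (hf.continuousOn.integrableOn_compact
    ((isCompact_Icc (a := fun _ : Fin d => -(1 / 2 : ℝ)) (b := fun _ => 1 / 2)).image
      (PiLp.continuous_toLp 2 _))).mono_set
    fun x hx => ⟨WithLp.ofLp x, ⟨fun i => (hx i).1.le, fun i => (hx i).2⟩, WithLp.toLp_ofLp 2 x⟩

theorem abs_riemannSum_sub_setIntegral_cubeΩ_le {N : ℕ} (hN : 0 < N) {f : Vec d → ℝ}
    (hf : IntegrableOn f (cubeΩ d)) {g : ZLat d → ℝ} {δ : ℝ}
    (hfg : ∀ z ∈ gridSet d N, ∀ x ∈ gridCell N z, |g z - f x| ≤ δ) :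
    |((N : ℝ)⁻¹) ^ d * ∑ z ∈ gridSet d N, g z - ∫ x in cubeΩ d, f x| ≤ δ := by
  have hvol : ∀ z : ZLat d, volume.real (gridCell N z) = ((N : ℝ)⁻¹) ^ d := fun z => by
    rw [measureReal_def, volume_gridCell, ENNReal.toReal_ofReal (by positivity)]
  have hcell : ∀ z : ZLat d, volume (gridCell N z) < ⊤ := fun z => by
    rw [volume_gridCell]; exact ENNReal.ofReal_lt_top
  have hf_cell : ∀ z ∈ gridSet d N, IntegrableOn f (gridCell N z) := fun z hz =>
    hf.mono_set ((cubeΩ_eq_biUnion_gridCell hN).symm ▸ subset_biUnion_of_mem (u := gridCell N) hz)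
  have hsplit : ((N : ℝ)⁻¹) ^ d * ∑ z ∈ gridSet d N, g z - ∫ x in cubeΩ d, f x
      = ∑ z ∈ gridSet d N, ∫ x in gridCell N z, (g z - f x) := by
    rw [cubeΩ_eq_biUnion_gridCell hN, integral_biUnion_finset _
      (fun z _ => measurableSet_gridCell N z) (pairwiseDisjoint_gridCell hN _) hf_cell,
      Finset.mul_sum, ← Finset.sum_sub_distrib]
    refine Finset.sum_congr rfl fun z hz => ?_
    rw [integral_sub (integrableOn_const (C := g z) (hcell z).ne) (hf_cell z hz), setIntegral_const,
      hvol, smul_eq_mul, mul_comm]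
  rw [hsplit]
  calc |∑ z ∈ gridSet d N, ∫ x in gridCell N z, (g z - f x)|
      ≤ ∑ z ∈ gridSet d N, δ * ((N : ℝ)⁻¹) ^ d := by
        refine (Finset.abs_sum_le_sum_abs _ _).trans (Finset.sum_le_sum fun z hz => ?_)
        rw [← hvol z]
        exact norm_setIntegral_le_of_norm_le_const (f := fun x => g z - f x) (hcell z)
          fun x hx => (Real.norm_eq_abs _).trans_le (hfg z hz x hx)
    _ = δ := by
        rw [Finset.sum_const, card_gridSet, nsmul_eq_mul, Nat.cast_pow, mul_left_comm, ← mul_pow,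
          mul_inv_cancel₀ (Nat.cast_pos.2 hN).ne', one_pow, mul_one]

end Grid

theorem abs_sum_le_card_mul_of_forall_notMem_eq_zero {ι : Type*} [DecidableEq ι]
    (s T : Finset ι) {f : ι → ℝ} {B : ℝ} (hB : ∀ i, |f i| ≤ B) (hT : ∀ i ∉ T, f i = 0) :
    |∑ i ∈ s, f i| ≤ T.card * B := by
  rw [← Finset.sum_subset Finset.inter_subset_left fun i hs hn =>
    hT i fun hiT => hn (Finset.mem_inter.2 ⟨hs, hiT⟩)]
  calc |∑ i ∈ s ∩ T, f i| ≤ ∑ i ∈ s ∩ T, |f i| := Finset.abs_sum_le_sum_abs _ _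
    _ ≤ ∑ i ∈ T, |f i| :=
      Finset.sum_le_sum_of_subset_of_nonneg Finset.inter_subset_right fun i _ _ => abs_nonneg _
    _ ≤ T.card * B := by simpa using Finset.sum_le_card_nsmul T _ B fun i _ => hB i

theorem latpos_eq_toLpLin {d : ℕ} (F : Matrix (Fin d) (Fin d) ℝ) (ξ : ZLat d) :
    latpos F ξ = Matrix.toLpLin 2 2 F (intVec ξ) :=
  rfl

theorem finite_setOf_norm_latpos_lt {d : ℕ} {F : Matrix (Fin d) (Fin d) ℝ} (hF : IsUnit F.det)
    (r : ℝ) : {ξ : ZLat d | ‖latpos F ξ‖ < r}.Finite := by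
  set L : Vec d →L[ℝ] Vec d := LinearMap.toContinuousLinearMap (Matrix.toLpLin 2 2 F⁻¹)
  have hL : ∀ ξ, intVec ξ = L (latpos F ξ) := fun ξ => by
    simp [L, latpos_eq_toLpLin, Matrix.toLpLin_apply, Matrix.mulVec_mulVec,
      Matrix.nonsing_inv_mul F hF]
  set M : ℤ := ⌈‖L‖ * r⌉
  refine (Set.finite_Icc (fun _ => -M) (fun _ => M)).subset fun ξ hξ => ?_
  have hcoord : ∀ i, |(ξ i : ℝ)| ≤ M := fun i =>
    calc |(ξ i : ℝ)| = ‖intVec ξ i‖ := (Real.norm_eq_abs _).symm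
      _ ≤ ‖intVec ξ‖ := PiLp.norm_apply_le _ i
      _ ≤ ‖L‖ * ‖latpos F ξ‖ := hL ξ ▸ L.le_opNorm _
      _ ≤ ‖L‖ * r := by gcongr; exact le_of_lt hξ
      _ ≤ M := Int.le_ceil _
  exact ⟨fun i => by exact_mod_cast (abs_le.1 (hcoord i)).1,
    fun i => by exact_mod_cast (abs_le.1 (hcoord i)).2⟩

namespace MLSetting

variable {d S n : ℕ} (A : MLSetting d S n)

theorem finite_setOf_Vsite_ne : {ξ | A.Vsite ξ ≠ A.Vhom}.Finite :=
  (finite_setOf_norm_latpos_lt (A.hdetF ▸ isUnit_one) A.Rdef).subset fun ξ hξ =>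
    not_le.1 fun h => hξ (A.hVsite_hom ξ h)

theorem exists_abs_Vsite_sub_Vhom_le : ∃ B, ∀ ξ g, |A.Vsite ξ g - A.Vhom g| ≤ B := by
  obtain ⟨C, hC⟩ := A.hV_bdd
  obtain ⟨C', hC'⟩ := A.hVhom_bdd
  refine ⟨C + C', fun ξ g => (abs_sub _ _).trans (add_le_add ?_ ?_)⟩
  · simpa using hC ξ g 0 (by norm_num)
  · simpa using hC' g 0 (by norm_num)

theorem exists_lipschitzWith_Vhom : ∃ K, LipschitzWith K A.Vhom := by
  obtain ⟨C, hC⟩ := A.hVhom_bdd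
  exact ⟨_, lipschitzWith_toNNReal_of_norm_fderiv_le (A.hVhom_smooth.differentiable (by norm_num))
    fun g => by simpa using hC g 1 (by norm_num)⟩

theorem continuous_cbStrain {U : Vec d → Vec n} {q : Fin S → Vec d → Vec n}
    (hU : ContDiff ℝ 1 U) (hq : ∀ α, Continuous (q α)) : Continuous (A.cbStrain U q) :=
  continuous_pi fun _ =>
    (((hU.continuous_fderiv one_ne_zero).clm_apply continuous_const).add (hq _)).sub (hq _)

theorem Deps_apply {N : ℕ} (hN : 0 < N) (U : Vec d → Vec n) (q : Fin S → Vec d → Vec n)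
    (y : Vec d) (e : ↥A.R) :
    A.Deps N U q y e
      = ((N : ℝ)⁻¹)⁻¹ • (U (y + (N : ℝ)⁻¹ • latpos A.F e.1.1) - U y)
        + q e.1.2.2 (y + (N : ℝ)⁻¹ • latpos A.F e.1.1) - q e.1.2.1 y := by
  have hN' : (N : ℝ) ≠ 0 := Nat.cast_ne_zero.2 hN.ne'
  simp only [Deps, inv_inv, smul_sub, smul_add, smul_smul, mul_inv_cancel₀ hN', one_smul]
  abel

theorem norm_Deps_apply_sub_cbStrain_apply_le {U : Vec d → Vec n} {q : Fin S → Vec d → Vec n}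
    {KU Kq : ℝ≥0} (hU : Differentiable ℝ U) (hDU : LipschitzWith KU (fderiv ℝ U))
    (hq : ∀ α, LipschitzWith Kq (q α)) {N : ℕ} (hN : 0 < N) (x y : Vec d) (e : ↥A.R) :
    ‖A.Deps N U q y e - A.cbStrain U q x e‖
      ≤ KU * ((N : ℝ)⁻¹ * ‖latpos A.F e.1.1‖ + ‖y - x‖) * ‖latpos A.F e.1.1‖
        + Kq * ((N : ℝ)⁻¹ * ‖latpos A.F e.1.1‖ + ‖y - x‖) + Kq * ‖y - x‖ := by
  set ε : ℝ := (N : ℝ)⁻¹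
  set v := latpos A.F e.1.1
  have hε : 0 < ε := inv_pos.2 (Nat.cast_pos.2 hN)
  have hshift : ‖y + ε • v - x‖ ≤ ε * ‖v‖ + ‖y - x‖ := by
    calc ‖y + ε • v - x‖ = ‖ε • v + (y - x)‖ := by congr 1; abel
      _ ≤ ‖ε • v‖ + ‖y - x‖ := norm_add_le _ _
      _ = ε * ‖v‖ + ‖y - x‖ := by rw [norm_smul, Real.norm_of_nonneg hε.le]
  rw [A.Deps_apply hN, cbStrain]
  calc ‖ε⁻¹ • (U (y + ε • v) - U y) + q e.1.2.2 (y + ε • v) - q e.1.2.1 y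
        - (fderiv ℝ U x v + q e.1.2.2 x - q e.1.2.1 x)‖
      = ‖(ε⁻¹ • (U (y + ε • v) - U y) - fderiv ℝ U x v)
          + (q e.1.2.2 (y + ε • v) - q e.1.2.2 x) - (q e.1.2.1 y - q e.1.2.1 x)‖ := by
        congr 1; abel
    _ ≤ ‖ε⁻¹ • (U (y + ε • v) - U y) - fderiv ℝ U x v‖
          + ‖q e.1.2.2 (y + ε • v) - q e.1.2.2 x‖ + ‖q e.1.2.1 y - q e.1.2.1 x‖ :=
        (norm_sub_le _ _).trans (by gcongr; exact norm_add_le _ _)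
    _ ≤ _ := by
        gcongr
        · exact norm_inv_smul_sub_sub_fderiv_le hU hDU hε x y v
        · exact (hq _).norm_sub_le _ _ |>.trans (by gcongr)
        · exact (hq _).norm_sub_le _ _

theorem exists_norm_Deps_sub_cbStrain_le {U : Vec d → Vec n} {q : Fin S → Vec d → Vec n}
    (hU : ContDiff ℝ 2 U) (hq : ∀ α, ContDiff ℝ 1 (q α)) (hUper : ZPeriodic U)
    (hqper : ∀ α, ZPeriodic (q α)) :
    ∃ C, ∀ N : ℕ, 0 < N → ∀ x y : Vec d, ‖x - y‖ ≤ d * (N : ℝ)⁻¹ →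
      ‖A.Deps N U q y - A.cbStrain U q x‖ ≤ C * (N : ℝ)⁻¹ := by
  obtain ⟨KU, hKU⟩ := exists_lipschitzWith_of_forall_add_intVec_eq (hU.fderiv_right le_rfl)
    fun x m => fderiv_add_of_forall_add_eq (fun y => hUper y m) x
  choose Kq hKq using fun α => exists_lipschitzWith_of_forall_add_intVec_eq (hq α) (hqper α)
  have hK : ∀ α, LipschitzWith (Finset.univ.sup Kq) (q α) := fun α =>
    (hKq α).weaken (Finset.le_sup (Finset.mem_univ α))
  set r := ‖fun e : ↥A.R => latpos A.F e.1.1‖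
  refine ⟨KU * (r + d) * r + Finset.univ.sup Kq * (r + 2 * d), fun N hN x y hxy => ?_⟩
  have hε : 0 < (N : ℝ)⁻¹ := inv_pos.2 (Nat.cast_pos.2 hN)
  rw [norm_sub_rev] at hxy
  refine (pi_norm_le_iff_of_nonneg (by positivity)).2 fun e => ?_
  have hv : ‖latpos A.F e.1.1‖ ≤ r := norm_le_pi_norm (fun e : ↥A.R => latpos A.F e.1.1) e
  refine (A.norm_Deps_apply_sub_cbStrain_apply_le (hU.differentiable (by norm_num)) hKU hK hN
    x y e).trans ?_
  calc _ ≤ KU * ((N : ℝ)⁻¹ * r + d * (N : ℝ)⁻¹) * r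
        + Finset.univ.sup Kq * ((N : ℝ)⁻¹ * r + d * (N : ℝ)⁻¹)
        + Finset.univ.sup Kq * (d * (N : ℝ)⁻¹) := by gcongr
    _ = _ := by ring

theorem exists_abs_sum_Vsite_sub_Vhom_le : ∃ C, ∀ N : ℕ, 0 < N → ∀ (s : Finset (ZLat d))
    (X : ZLat d → ↥A.R → Vec n),
      |((N : ℝ)⁻¹) ^ d * ∑ z ∈ s, (A.Vsite z (X z) - A.Vhom (X z))| ≤ C * (N : ℝ)⁻¹ := by
  obtain ⟨B, hB⟩ := A.exists_abs_Vsite_sub_Vhom_le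
  set T := A.finite_setOf_Vsite_ne.toFinset
  have hT : ∀ X : ZLat d → ↥A.R → Vec n, ∀ z ∉ T, A.Vsite z (X z) - A.Vhom (X z) = 0 :=
    fun X z hz => by
      rw [Set.Finite.mem_toFinset, Set.mem_ofPred_eq, not_not] at hz
      rw [hz, sub_self]
  have hd : d ≠ 0 := by rcases A.hd with rfl | rfl <;> norm_num
  refine ⟨T.card * B, fun N hN s X => ?_⟩
  have hε : 0 < (N : ℝ)⁻¹ := inv_pos.2 (Nat.cast_pos.2 hN)
  rw [abs_mul, abs_of_pos (pow_pos hε d), mul_comm _ (N : ℝ)⁻¹]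
  exact mul_le_mul (pow_le_of_le_one hε.le (inv_le_one_of_one_le₀ (by exact_mod_cast hN)) hd)
    (abs_sum_le_card_mul_of_forall_notMem_eq_zero s T (fun z => hB z (X z)) (hT X))
    (abs_nonneg _) hε.le

theorem exists_abs_sum_Vhom_sub_EcΩ_le {U : Vec d → Vec n} {q : Fin S → Vec d → Vec n}
    (hU : ContDiff ℝ 2 U) (hq : ∀ α, ContDiff ℝ 1 (q α)) (hUper : ZPeriodic U)
    (hqper : ∀ α, ZPeriodic (q α)) :
    ∃ C, ∀ N : ℕ, 0 < N →
      |((N : ℝ)⁻¹) ^ d * ∑ z ∈ gridSet d N,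
          (A.Vhom (A.yvec + A.Deps N U q (gridPt N z)) - A.Vhom A.yvec) - A.EcΩ U q|
        ≤ C * (N : ℝ)⁻¹ := by
  obtain ⟨Cε, hCε⟩ := A.exists_norm_Deps_sub_cbStrain_le hU hq hUper hqper
  obtain ⟨K, hK⟩ := A.exists_lipschitzWith_Vhom
  have hcont : Continuous fun x => A.Vhom (A.yvec + A.cbStrain U q x) - A.Vhom A.yvec :=
    (A.hVhom_smooth.continuous.comp (continuous_const.add (A.continuous_cbStrain
      (hU.of_le (by norm_num)) fun α => (hq α).continuous))).sub continuous_const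
  refine ⟨K * Cε, fun N hN => ?_⟩
  refine abs_riemannSum_sub_setIntegral_cubeΩ_le hN hcont.integrableOn_cubeΩ fun z _ x hx => ?_
  rw [sub_sub_sub_cancel_right, ← Real.dist_eq, mul_assoc]
  calc dist (A.Vhom (A.yvec + A.Deps N U q (gridPt N z))) (A.Vhom (A.yvec + A.cbStrain U q x))
      ≤ K * ‖A.Deps N U q (gridPt N z) - A.cbStrain U q x‖ := by
        rw [← add_sub_add_left_eq_sub _ _ A.yvec, ← dist_eq_norm]
        exact hK.dist_le_mul _ _
    _ ≤ K * (Cε * (N : ℝ)⁻¹) := by gcongr; exact hCε N hN x _ (norm_sub_gridPt_le hx)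

theorem Eaeps_eq_defect_add_hom (N : ℕ) (U : Vec d → Vec n) (q : Fin S → Vec d → Vec n) :
    A.Eaeps N U q
      = ((N : ℝ)⁻¹) ^ d * ∑ z ∈ gridSet d N,
          (A.Vsite z (A.yvec + A.Deps N U q (gridPt N z))
            - A.Vhom (A.yvec + A.Deps N U q (gridPt N z)))
        + ((N : ℝ)⁻¹) ^ d * ∑ z ∈ gridSet d N,
          (A.Vhom (A.yvec + A.Deps N U q (gridPt N z)) - A.Vhom A.yvec) := by
  simp only [← mul_add, ← Finset.sum_add_distrib, sub_add_sub_cancel]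
  rfl

end MLSetting

/-- Lemma: first-order consistency of the Cauchy–Born
energy.  For periodic fields `U ∈ C³(Ω, ℝ^n)`, `p_α ∈ C²(Ω, ℝ^n)` and the
atomistic fields `u^ε_α = U + ε p_α`, `ε = 1/N`, there is a constant `C`,
independent of `ε`, with `|E^a_ε(u^ε) − E^c_Ω(U,p)| ≤ C ε`. -/
theorem cauchy_born_energy_consistency {d S n : ℕ} (A : MLSetting d S n)
    (U : Vec d → Vec n) (q : Fin S → Vec d → Vec n)
    (hU : ContDiff ℝ 3 U) (hq : ∀ α, ContDiff ℝ 2 (q α))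
    (hUper : ZPeriodic U) (hqper : ∀ α, ZPeriodic (q α)) :
    ∃ C : ℝ, ∀ N : ℕ, 0 < N →
      |A.Eaeps N U q - A.EcΩ U q| ≤ C * (N : ℝ)⁻¹ := by
  obtain ⟨Cdef, hdef⟩ := A.exists_abs_sum_Vsite_sub_Vhom_le
  obtain ⟨Chom, hhom⟩ := A.exists_abs_sum_Vhom_sub_EcΩ_le (hU.of_le (by norm_num))
    (fun α => (hq α).of_le (by norm_num)) hUper hqper
  refine ⟨Cdef + Chom, fun N hN => ?_⟩
  rw [A.Eaeps_eq_defect_add_hom, add_sub_assoc, add_mul]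
  exact (abs_add_le _ _).trans (add_le_add (hdef N hN _ _) (hhom N hN))
end
end
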